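/- arXiv:1302.2406 — 5 statements merged into one kernel-verified Lean document; each statement's English description precedes it below -/
import Mathlib

section
/- Let Ω₁ ⊂ ℂⁿ be a balanced region, Ω₂ ⊂ ℂᵐ a bounded convex balanced region, and F : Ω₁ → Ω₂ a holomorphic map. Then the derivative F'(0) (a ℂ-linear map ℂⁿ → ℂᵐ) maps Ω₁ into Ω₂. -/
/-! Fix `z ∈ Ω₁` and `s > 1` with `s • z ∈ Ω₁`. The holomorphic disc `g ζ = F (ζ • s • z)` maps the
unit circle into `Ω₂`, and by Cauchy's formula `g'(0) = s • F'(0) z` is the circle average of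
`ζ⁻¹ • g ζ`. As `Ω₂` is convex and invariant under unimodular scalars, this average lies in the
closure of `Ω₂`; since `0` is an interior point of the convex set `Ω₂` and `s > 1`, `F'(0) z ∈ Ω₂`. -/

open Complex Metric Set Real Topology

theorem Convex.circleAverage_mem_closure {E : Type*} [NormedAddCommGroup E] [NormedSpace ℝ E]
    [CompleteSpace E] {K : Set E} (hK : Convex ℝ K) {f : ℂ → E} {c : ℂ} {R : ℝ}
    (hf : CircleIntegrable f c R) (hfK : ∀ θ, f (circleMap c R θ) ∈ K) :
    circleAverage f c R ∈ closure K := by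
  rw [circleAverage_eq_intervalAverage]
  refine hK.set_average_mem_closure ?_ ?_ (Filter.Eventually.of_forall hfK)
    (intervalIntegrable_iff.mp hf)
  · simp [uIoc_of_le two_pi_pos.le, pi_pos]
  · simp [uIoc_of_le two_pi_pos.le, ENNReal.mul_eq_top]

theorem DiffContOnCl.deriv_eq_circleAverage {E : Type*} [NormedAddCommGroup E]
    [NormedSpace ℂ E] [CompleteSpace E] {g : ℂ → E} {c : ℂ} {R : ℝ} (hR : 0 < R)
    (hg : DiffContOnCl ℂ g (ball c R)) :
    deriv g c = Real.circleAverage (fun z => (z - c)⁻¹ • g z) c R := by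
  rw [circleAverage_eq_circleIntegral hR.ne']
  simp_rw [smul_smul, ← sq, inv_pow, ← one_div, hg.deriv_eq_smul_circleIntegral hR, smul_smul,
    one_div_mul_cancel two_pi_I_ne_zero, one_smul]

theorem deriv_mem_closure_of_mapsTo_sphere {E : Type*} [NormedAddCommGroup E]
    [NormedSpace ℂ E] [CompleteSpace E] {K : Set E} (hK : Convex ℝ K)
    (hKrot : ∀ w ∈ K, ∀ ζ : ℂ, ‖ζ‖ = 1 → ζ • w ∈ K) {g : ℂ → E}
    (hg : DiffContOnCl ℂ g (ball 0 1)) (hgK : MapsTo g (sphere 0 1) K) :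
    deriv g 0 ∈ closure K := by
  rw [hg.deriv_eq_circleAverage one_pos]
  simp only [sub_zero]
  refine hK.circleAverage_mem_closure ?_ fun θ => hKrot _ (hgK (by simp)) _ (by simp)
  refine ContinuousOn.circleIntegrable zero_le_one (ContinuousOn.smul ?_ ?_)
  · exact continuousOn_inv₀.mono fun z hz => ne_zero_of_mem_sphere one_ne_zero ⟨z, hz⟩
  · exact hg.continuousOn.mono (closure_ball (0 : ℂ) one_ne_zero ▸ sphere_subset_closedBall)

theorem Convex.mem_interior_of_smul_mem_closure_of_one_lt {E : Type*} [NormedAddCommGroup E]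
    [NormedSpace ℝ E] {K : Set E} (hK : Convex ℝ K) (h0 : 0 ∈ interior K) {t : ℝ} (ht : 1 < t)
    {w : E} (hw : t • w ∈ closure K) : w ∈ interior K := by
  obtain ⟨v, hv, hvw⟩ := hK.closure_subset_image_homothety_interior_of_one_lt h0 t ht hw
  rw [AffineMap.homothety_apply, vsub_eq_sub, sub_zero, vadd_eq_add, add_zero] at hvw
  rwa [← smul_right_injective E (zero_lt_one.trans ht).ne' hvw]

theorem IsOpen.exists_one_lt_smul_mem {E : Type*} [AddCommGroup E] [Module ℝ E]
    [TopologicalSpace E] [ContinuousSMul ℝ E] {U : Set E} (hU : IsOpen U) {z : E} (hz : z ∈ U) :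
    ∃ s : ℝ, 1 < s ∧ s • z ∈ U := by
  have hcont : Filter.Tendsto (fun s : ℝ => s • z) (𝓝[>] 1) (𝓝 z) :=
    ((continuous_id.smul continuous_const).tendsto' 1 z (one_smul ℝ z)).mono_left
      nhdsWithin_le_nhds
  obtain ⟨s, hsU, hs⟩ := ((hcont.eventually (hU.mem_nhds hz)).and self_mem_nhdsWithin).exists
  exact ⟨s, hs, hsU⟩

theorem HasFDerivAt.hasDerivAt_comp_smul_const {𝕜 E F : Type*} [NontriviallyNormedField 𝕜]
    [NormedAddCommGroup E] [NormedSpace 𝕜 E] [NormedAddCommGroup F] [NormedSpace 𝕜 F]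
    {f : E → F} {f' : E →L[𝕜] F} (hf : HasFDerivAt f f' 0) (v : E) :
    HasDerivAt (fun t : 𝕜 => f (t • v)) (f' v) 0 :=
  hf.comp_hasDerivAt_of_eq 0 (by simpa using (hasDerivAt_id (0 : 𝕜)).smul_const v)
    (zero_smul 𝕜 v).symm

theorem stmt3_general {n m : ℕ}
    (Ω₁ : Set (EuclideanSpace ℂ (Fin n))) (Ω₂ : Set (EuclideanSpace ℂ (Fin m)))
    (h1open : IsOpen Ω₁)
    (h1bal : ∀ z ∈ Ω₁, ∀ ζ : ℂ, ‖ζ‖ ≤ 1 → ζ • z ∈ Ω₁)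
    (h2open : IsOpen Ω₂)
    (h2conv : Convex ℝ Ω₂)
    (h2bal : ∀ w ∈ Ω₂, ∀ ζ : ℂ, ‖ζ‖ ≤ 1 → ζ • w ∈ Ω₂)
    (F : EuclideanSpace ℂ (Fin n) → EuclideanSpace ℂ (Fin m))
    (hF : DifferentiableOn ℂ F Ω₁) (hFmaps : Set.MapsTo F Ω₁ Ω₂) :
    ∀ z ∈ Ω₁, fderiv ℂ F 0 z ∈ Ω₂ := by
  intro z hz
  have h0₁ : (0 : EuclideanSpace ℂ (Fin n)) ∈ Ω₁ := by simpa using h1bal z hz 0 (by simp)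
  have h0₂ : (0 : EuclideanSpace ℂ (Fin m)) ∈ Ω₂ := by
    simpa using h2bal _ (hFmaps h0₁) 0 (by simp)
  obtain ⟨s, hs, hsz⟩ := h1open.exists_one_lt_smul_mem hz
  have hdisc : ∀ ζ : ℂ, ‖ζ‖ ≤ 1 → ζ • s • z ∈ Ω₁ := fun ζ hζ => h1bal _ hsz ζ hζ
  set g : ℂ → EuclideanSpace ℂ (Fin m) := fun ζ => F (ζ • s • z)
  have hg : DifferentiableOn ℂ g (closedBall 0 1) :=
    hF.comp (by fun_prop) fun ζ hζ => hdisc ζ (by simpa using hζ)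
  have hg_deriv : deriv g 0 = fderiv ℂ F 0 (s • z) :=
    ((hF.differentiableAt (h1open.mem_nhds h0₁)).hasFDerivAt.hasDerivAt_comp_smul_const _).deriv
  have hclosure : s • fderiv ℂ F 0 z ∈ closure Ω₂ := by
    rw [← ContinuousLinearMap.map_smul_of_tower, ← hg_deriv]
    exact deriv_mem_closure_of_mapsTo_sphere h2conv (fun w hw ζ hζ => h2bal w hw ζ hζ.le)
      (hg.mono closure_ball_subset_closedBall).diffContOnCl
      fun ζ hζ => hFmaps (hdisc ζ (mem_sphere_zero_iff_norm.mp hζ).le)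
  rw [← h2open.interior_eq] at h0₂ ⊢
  exact h2conv.mem_interior_of_smul_mem_closure_of_one_lt h0₂ hs hclosure

/-- Schwarz lemma for convex balanced domains, part (i):
if `Ω₁ ⊂ ℂⁿ` is a balanced region, `Ω₂ ⊂ ℂᵐ` a bounded convex balanced region, and
`F : Ω₁ → Ω₂` is holomorphic, then `F'(0)` maps `Ω₁` into `Ω₂`. -/
theorem stmt3 {n m : ℕ}
    (Ω₁ : Set (EuclideanSpace ℂ (Fin n))) (Ω₂ : Set (EuclideanSpace ℂ (Fin m)))
    (h1open : IsOpen Ω₁) (h1conn : IsConnected Ω₁)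
    (h1bal : ∀ z ∈ Ω₁, ∀ ζ : ℂ, ‖ζ‖ ≤ 1 → ζ • z ∈ Ω₁)
    (h2open : IsOpen Ω₂) (h2conn : IsConnected Ω₂)
    (h2bdd : Bornology.IsBounded Ω₂) (h2conv : Convex ℝ Ω₂)
    (h2bal : ∀ w ∈ Ω₂, ∀ ζ : ℂ, ‖ζ‖ ≤ 1 → ζ • w ∈ Ω₂)
    (F : EuclideanSpace ℂ (Fin n) → EuclideanSpace ℂ (Fin m))
    (hF : DifferentiableOn ℂ F Ω₁) (hFmaps : Set.MapsTo F Ω₁ Ω₂) :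
    ∀ z ∈ Ω₁, fderiv ℂ F 0 z ∈ Ω₂ :=
  stmt3_general Ω₁ Ω₂ h1open h1bal h2open h2conv h2bal F hF hFmaps
end

section
/- Let D be a bounded convex balanced domain in ℂⁿ, so that D is the open unit ball of a norm ‖·‖ on ℂⁿ. Let F : D → D be holomorphic with F(0) = 0, and suppose F restricts to a biholomorphism between two subregions W₁, W₂ of D containing 0. For z ∈ D \ {0} let Δ_z := {ζz : ζ ∈ ℂ, ζz ∈ D}. If z ∈ W₁ is such that Δ_z ⊆ W₁ and Δ_{F(z)} ⊆ W₂, then ‖F(z)‖ = ‖z‖. -/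
/-!
A supporting functional of the seminorm at `G z` (Hahn–Banach), composed with `G` along the
complex line `ζ ↦ ζ • z`, is holomorphic on the disc `‖ζ‖ * p z < 1`, takes values in the unit
disc and vanishes at `0`; the one-variable Schwarz lemma then gives
`q (G z) ≤ p z`. Applied to `F` at `z` and to `Finv` at `F z` this yields both inequalities.
-/

open Set Metric

theorem Seminorm.exists_dual_norm_le_of_apply_eq {𝕜 E : Type*} [RCLike 𝕜] [AddCommGroup E]
    [Module 𝕜 E] (p : Seminorm 𝕜 E) (x : E) :
    ∃ ℓ : Module.Dual 𝕜 E, (∀ y, ‖ℓ y‖ ≤ p y) ∧ ℓ x = p x := by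
  have hker : ∀ c : 𝕜, c • x = 0 → (RingHom.id 𝕜) c • (p x : 𝕜) = 0 := by
    intro c hc
    rcases smul_eq_zero.mp hc with rfl | rfl <;> simp
  let f := LinearPMap.mkSpanSingleton' x (p x : 𝕜) hker
  have hf : ∀ y : f.domain, ‖f y‖ ≤ p y := by
    rintro ⟨y, hy⟩
    obtain ⟨c, rfl⟩ := Submodule.mem_span_singleton.mp hy
    rw [LinearPMap.mkSpanSingleton'_apply, map_smul_eq_mul]
    simp [abs_of_nonneg (apply_nonneg p x)]
  obtain ⟨ℓ, hℓf, hℓp⟩ := Module.Dual.exists_extension_of_le_seminorm f.domain f.toFun hf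
  refine ⟨ℓ, hℓp, ?_⟩
  have hx : x ∈ f.domain := Submodule.mem_span_singleton_self x
  exact (hℓf ⟨x, hx⟩).trans (LinearPMap.mkSpanSingleton'_apply_self x _ hker hx)

theorem Complex.norm_apply_one_le_of_mapsTo_unitBall {V : Type*} [NormedAddCommGroup V]
    [NormedSpace ℂ V] {φ : ℂ → V} {a : ℝ} (ha₀ : 0 ≤ a) (ha₁ : a < 1)
    (hd : DifferentiableOn ℂ φ {ζ | ‖ζ‖ * a < 1}) (hmaps : ∀ ζ : ℂ, ‖ζ‖ * a < 1 → ‖φ ζ‖ < 1)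
    (h0 : φ 0 = 0) : ‖φ 1‖ ≤ a := by
  refine le_of_forall_gt_imp_ge_of_dense fun r har => ?_
  rcases le_or_gt 1 r with hr1 | hr1
  · exact (hmaps 1 (by simpa using ha₁)).le.trans hr1
  have hr : 0 < r := ha₀.trans_lt har
  have hball : ball (0 : ℂ) r⁻¹ ⊆ {ζ | ‖ζ‖ * a < 1} := by
    intro ζ hζ
    rw [mem_ball_zero_iff, ← one_div, lt_div_iff₀ hr] at hζ
    exact (mul_le_mul_of_nonneg_left har.le (norm_nonneg ζ)).trans_lt hζ
  have hone : (1 : ℂ) ∈ ball (0 : ℂ) r⁻¹ := by simpa using (one_lt_inv₀ hr).mpr hr1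
  have := Complex.dist_le_div_mul_dist_of_mapsTo_ball (hd.mono hball)
    (fun ζ hζ => by simpa [h0] using (hmaps ζ (hball hζ)).le) hone
  simpa [h0] using this

theorem Seminorm.apply_le_of_differentiableOn_of_mapsTo_ball {E F : Type*}
    [NormedAddCommGroup E] [NormedSpace ℂ E] [NormedAddCommGroup F] [NormedSpace ℂ F]
    [FiniteDimensional ℂ F] (p : Seminorm ℂ E) (q : Seminorm ℂ F) {G : E → F} {S : Set E}
    (hG : DifferentiableOn ℂ G S) (hGS : MapsTo G S (q.ball 0 1)) (hG0 : G 0 = 0)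
    {z : E} (hz : p z < 1) (hline : ∀ ζ : ℂ, p (ζ • z) < 1 → ζ • z ∈ S) :
    q (G z) ≤ p z := by
  obtain ⟨ℓ, hℓq, hℓGz⟩ := q.exists_dual_norm_le_of_apply_eq (G z)
  have hline' : MapsTo (· • z) {ζ : ℂ | ‖ζ‖ * p z < 1} S := fun ζ hζ =>
    hline ζ (by rwa [map_smul_eq_mul])
  have hφ := Complex.norm_apply_one_le_of_mapsTo_unitBall (φ := fun ζ : ℂ => ℓ (G (ζ • z)))
    (apply_nonneg p z) hz
    ((LinearMap.toContinuousLinearMap ℓ).differentiable.comp_differentiableOn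
      (hG.comp (differentiable_id.smul_const z).differentiableOn hline'))
    (fun ζ hζ => (hℓq _).trans_lt (by simpa using hGS (hline' hζ))) (by simp [hG0])
  simpa [hℓGz, abs_of_nonneg (apply_nonneg q _)] using hφ

theorem stmt4_general {n : ℕ} (ν : EuclideanSpace ℂ (Fin n) → ℝ)
    (hνsmul : ∀ (c : ℂ) z, ν (c • z) = ‖c‖ * ν z)
    (hνadd : ∀ z w, ν (z + w) ≤ ν z + ν w)
    (D : Set (EuclideanSpace ℂ (Fin n))) (hD : D = {z | ν z < 1})
    (F Finv : EuclideanSpace ℂ (Fin n) → EuclideanSpace ℂ (Fin n))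
    (hF : DifferentiableOn ℂ F D) (hFmaps : Set.MapsTo F D D) (hF0 : F 0 = 0)
    (W₁ W₂ : Set (EuclideanSpace ℂ (Fin n)))
    (hW₁ : W₁ ⊆ D)
    (h0W₁ : 0 ∈ W₁)
    (hFinv : DifferentiableOn ℂ Finv W₂) (hFinvmaps : Set.MapsTo Finv W₂ W₁)
    (hleft : ∀ z ∈ W₁, Finv (F z) = z)
    (z : EuclideanSpace ℂ (Fin n)) (hz : z ∈ W₁)
    (hΔ₂ : {w | ∃ ζ : ℂ, w = ζ • F z} ∩ D ⊆ W₂) :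
    ν (F z) = ν z := by
  let p : Seminorm ℂ (EuclideanSpace ℂ (Fin n)) := Seminorm.of ν hνadd hνsmul
  have hDp : D = p.ball 0 1 := by ext; simp only [hD, Seminorm.mem_ball, sub_zero]; rfl
  have hzD : p z < 1 := by simpa [hDp] using hW₁ hz
  refine le_antisymm ?_ ?_
  · exact p.apply_le_of_differentiableOn_of_mapsTo_ball p hF (hDp ▸ hFmaps) hF0 hzD
      fun ζ hζ => by simpa [hDp] using hζ
  · have hFinv0 : Finv 0 = 0 := by simpa [hF0] using hleft 0 h0W₁
    have hFzD : p (F z) < 1 := by simpa [hDp] using hFmaps (hW₁ hz)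
    have h := p.apply_le_of_differentiableOn_of_mapsTo_ball p hFinv
      (hDp ▸ hFinvmaps.mono_right hW₁) hFinv0 hFzD
      fun ζ hζ => hΔ₂ ⟨⟨ζ, rfl⟩, by simpa [hDp] using hζ⟩
    rwa [hleft z hz] at h

/-- Key Lemma computation: Let `D` be the open unit ball of a norm `ν` on `ℂⁿ`
(a bounded convex balanced domain), `F : D → D` holomorphic with `F(0) = 0`, restricting to
a biholomorphism of subregions `W₁, W₂ ∋ 0` of `D`.  If `z ∈ W₁` satisfies
`Δ_z ⊆ W₁` and `Δ_{F(z)} ⊆ W₂`, then `ν(F z) = ν z`. -/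
theorem stmt4 {n : ℕ} (ν : EuclideanSpace ℂ (Fin n) → ℝ)
    (hν0 : ∀ z, ν z = 0 ↔ z = 0)
    (hνsmul : ∀ (c : ℂ) z, ν (c • z) = ‖c‖ * ν z)
    (hνadd : ∀ z w, ν (z + w) ≤ ν z + ν w)
    (D : Set (EuclideanSpace ℂ (Fin n))) (hD : D = {z | ν z < 1})
    (hbdd : Bornology.IsBounded D)
    (F Finv : EuclideanSpace ℂ (Fin n) → EuclideanSpace ℂ (Fin n))
    (hF : DifferentiableOn ℂ F D) (hFmaps : Set.MapsTo F D D) (hF0 : F 0 = 0)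
    (W₁ W₂ : Set (EuclideanSpace ℂ (Fin n)))
    (hW₁ : W₁ ⊆ D) (hW₂ : W₂ ⊆ D)
    (hW₁open : IsOpen W₁) (hW₂open : IsOpen W₂)
    (h0W₁ : 0 ∈ W₁) (h0W₂ : 0 ∈ W₂)
    (hFW : Set.MapsTo F W₁ W₂)
    (hFinv : DifferentiableOn ℂ Finv W₂) (hFinvmaps : Set.MapsTo Finv W₂ W₁)
    (hleft : ∀ z ∈ W₁, Finv (F z) = z) (hright : ∀ w ∈ W₂, F (Finv w) = w)
    (z : EuclideanSpace ℂ (Fin n)) (hz : z ∈ W₁)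
    (hΔ₁ : {w | ∃ ζ : ℂ, w = ζ • z} ∩ D ⊆ W₁)
    (hΔ₂ : {w | ∃ ζ : ℂ, w = ζ • F z} ∩ D ⊆ W₂) :
    ν (F z) = ν z :=
  stmt4_general ν hνsmul hνadd D hD F Finv hF hFmaps hF0 W₁ W₂ hW₁ h0W₁ hFinv hFinvmaps hleft z hz
    hΔ₂
end

section
/- Let D ⊂ ℂⁿ be a bounded domain and p ∈ ∂D. Suppose there is a ball B centered at p and a function h, holomorphic on B ∩ D and continuous on the closure of B ∩ D, with h(p) = 1 and |h(z)| < 1 for all z in the closure of B ∩ D other than p. Let a₀ ∈ D and let {φ_k} be a sequence of automorphisms of D (biholomorphic self-maps) with φ_k(a₀) → p. Then φ_k converges uniformly on compact subsets of D to the constant map with value p. -/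
/-!
Everything is reduced to the unit disc. If `f : 𝔻 → 𝔻` is holomorphic, the Schwarz lemma applied
to the Möbius transform of `f` that vanishes at `0` gives
`|1 - f λ| (1 - |λ|) ≤ |1 - f 0| (1 + |λ|)`. Since `D` is bounded, the Schwarz lemma also makes the
holomorphic self-maps of `D` equicontinuous near each point, so once `φ_k x` is close to `p`, the
complex line through `x` and any nearby `z` is mapped by `φ_k` into `B ∩ D`. Restricting `h ∘ φ_k`
to that line, `h (φ_k z) → 1` uniformly for `z` near `x`, and because `h` peaks only at `p` this
forces `φ_k → p` uniformly near `x`. Hence the set where `φ_k → p` is open and closed in the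
connected set `D`, and it contains `a₀`.
-/

open Filter Metric Set Topology ComplexConjugate

theorem IsCompact.exists_pos_forall_dist_lt_of_apply_ne {X Y : Type*} [PseudoMetricSpace X]
    [MetricSpace Y] {S : Set X} (hS : IsCompact S) {g : X → Y} (hg : ContinuousOn g S) {p : X}
    (hp : ∀ z ∈ S, z ≠ p → g z ≠ g p) {ε : ℝ} (hε : 0 < ε) :
    ∃ δ > 0, ∀ w ∈ S, dist (g w) (g p) < δ → dist w p < ε := by
  have hS' : IsCompact (S ∩ {w | ε ≤ dist w p}) :=
    hS.inter_right (isClosed_le continuous_const (continuous_id.dist continuous_const))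
  obtain ⟨δ, hδ, hle⟩ := hS'.exists_forall_le'
    ((continuous_id.dist continuous_const).comp_continuousOn (hg.mono inter_subset_left))
    fun w hw => dist_pos.2 (hp w hw.1 fun hwp => by simp [hwp] at hw; linarith [hw.2])
  exact ⟨δ, hδ, fun w hw hlt => not_le.1 fun hεw => (hle w ⟨hw, hεw⟩).not_gt hlt⟩

theorem IsPreconnected.induction_of_exists_nhds {X : Type*} [TopologicalSpace X] {D : Set X}
    (hD : IsPreconnected D) {Q : X → Prop} (hloc : ∀ c ∈ D, ∃ V ∈ 𝓝 c, ∀ x ∈ V, Q x → ∀ z ∈ V, Q z)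
    {a : X} (ha : a ∈ D) (hQa : Q a) {z : X} (hz : z ∈ D) : Q z := by
  refine hD.induction₂' (fun x y => Q x → Q y) (fun c hc => ?_)
    (fun _ _ _ _ _ _ hxy hyz => hyz ∘ hxy) ha hz hQa
  obtain ⟨V, hV, hprop⟩ := hloc c hc
  filter_upwards [mem_nhdsWithin_of_mem_nhds hV] with y hy
  exact ⟨fun hQc => hprop c (mem_of_mem_nhds hV) hQc y hy,
    fun hQy => hprop y hy hQy c (mem_of_mem_nhds hV)⟩

namespace Complex

theorem normSq_one_sub_conj_mul_sub_normSq_sub (a w : ℂ) :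
    normSq (1 - conj a * w) - normSq (a - w) = (1 - normSq a) * (1 - normSq w) := by
  simp only [normSq_apply, sub_re, sub_im, mul_re, mul_im, conj_re, conj_im, one_re, one_im]
  ring

theorem norm_sub_lt_norm_one_sub_conj_mul {a w : ℂ} (ha : ‖a‖ < 1) (hw : ‖w‖ < 1) :
    ‖a - w‖ < ‖1 - conj a * w‖ := by
  have ha' : normSq a < 1 := by
    rw [normSq_eq_norm_sq]; exact pow_lt_one₀ (norm_nonneg a) ha two_ne_zero
  have hw' : normSq w < 1 := by
    rw [normSq_eq_norm_sq]; exact pow_lt_one₀ (norm_nonneg w) hw two_ne_zero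
  rw [← sq_lt_sq₀ (norm_nonneg _) (norm_nonneg _), ← normSq_eq_norm_sq, ← normSq_eq_norm_sq]
  nlinarith [normSq_one_sub_conj_mul_sub_normSq_sub a w]

theorem dist_one_mul_le_of_mapsTo_ball {f : ℂ → ℂ} (hf : DifferentiableOn ℂ f (ball 0 1))
    (hmaps : MapsTo f (ball 0 1) (ball 0 1)) {l : ℂ} (hl : ‖l‖ < 1) :
    dist (f l) 1 * (1 - ‖l‖) ≤ dist (f 0) 1 * (1 + ‖l‖) := by
  have hf1 : ∀ z ∈ ball (0 : ℂ) 1, ‖f z‖ < 1 := fun z hz => mem_ball_zero_iff.1 (hmaps hz)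
  set a := f 0
  have ha : ‖a‖ < 1 := hf1 0 (mem_ball_self one_pos)
  have hden : ∀ z ∈ ball (0 : ℂ) 1, 1 - conj a * f z ≠ 0 := fun z hz =>
    norm_pos_iff.1 ((norm_nonneg _).trans_lt (norm_sub_lt_norm_one_sub_conj_mul ha (hf1 z hz)))
  set g : ℂ → ℂ := fun z => (a - f z) / (1 - conj a * f z)
  have hg : DifferentiableOn ℂ g (ball 0 1) :=
    ((differentiableOn_const a).sub hf).div
      ((differentiableOn_const 1).sub ((differentiableOn_const _).mul hf)) hden
  have hgmaps : MapsTo g (ball 0 1) (closedBall 0 1) := fun z hz => by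
    rw [mem_closedBall_zero_iff, norm_div, div_le_one (norm_pos_iff.2 (hden z hz))]
    exact (norm_sub_lt_norm_one_sub_conj_mul ha (hf1 z hz)).le
  have hschwarz : ‖a - f l‖ ≤ ‖l‖ * ‖1 - conj a * f l‖ := by
    have := norm_le_norm_of_mapsTo_ball hg hgmaps (by simp [g, a]) hl
    rwa [norm_div, div_le_iff₀ (norm_pos_iff.2 (hden l (mem_ball_zero_iff.2 hl)))] at this
  have hden_le : ‖1 - conj a * f l‖ ≤ ‖1 - f l‖ + ‖1 - a‖ := by
    calc ‖1 - conj a * f l‖ = ‖(1 - f l) + conj (1 - a) * f l‖ := by congr 1; simp; ring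
      _ ≤ ‖1 - f l‖ + ‖1 - a‖ * ‖f l‖ := by
        grw [norm_add_le, norm_mul, RCLike.norm_conj]
      _ ≤ ‖1 - f l‖ + ‖1 - a‖ := by
        gcongr
        exact mul_le_of_le_one_right (norm_nonneg _) (hf1 l (mem_ball_zero_iff.2 hl)).le
  have htri : ‖1 - f l‖ ≤ ‖1 - a‖ + ‖a - f l‖ := norm_sub_le_norm_sub_add_norm_sub _ _ _
  rw [dist_eq_norm, dist_eq_norm, norm_sub_rev, norm_sub_rev (f 0)]
  nlinarith [norm_nonneg l, norm_nonneg (1 - a), norm_nonneg (1 - f l)]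

end Complex

section

variable {E : Type*} [NormedAddCommGroup E] [NormedSpace ℂ E]

theorem dist_one_le_three_mul_of_mapsTo_lineMap {U : Set E} {f : E → ℂ}
    (hf : DifferentiableOn ℂ f U) (hfU : MapsTo f U (ball 0 1)) {x z : E}
    (hline : MapsTo (AffineMap.lineMap x z) (ball (0 : ℂ) 2) U) :
    dist (f z) 1 ≤ 3 * dist (f x) 1 := by
  have hline' : MapsTo (fun l : ℂ => AffineMap.lineMap x z (2 * l)) (ball 0 1) U := fun l hl =>
    hline (by rw [mem_ball_zero_iff, norm_mul] at *; norm_num; linarith)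
  have hF : DifferentiableOn ℂ (fun l : ℂ => f (AffineMap.lineMap x z (2 * l))) (ball 0 1) :=
    hf.comp (((AffineMap.lineMap x z : ℂ →ᵃ[ℂ] E).differentiable.comp
      (differentiable_id.const_mul 2)).differentiableOn) hline'
  have := Complex.dist_one_mul_le_of_mapsTo_ball hF (hfU.comp hline') (l := 1 / 2) (by norm_num)
  norm_num at this
  linarith

theorem exists_forall_dist_lineMap_lt {D : Set E} (hD : IsOpen D) (hbdd : Bornology.IsBounded D)
    {c : E} (hc : c ∈ D) {ρ : ℝ} (hρ : 0 < ρ) :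
    ∃ t > 0, ∀ x ∈ ball c t, ∀ z ∈ ball c t, ∀ μ ∈ ball (0 : ℂ) 2,
      AffineMap.lineMap x z μ ∈ D ∧ ∀ φ : E → E, DifferentiableOn ℂ φ D → MapsTo φ D D →
        dist (φ (AffineMap.lineMap x z μ)) (φ x) < ρ := by
  obtain ⟨R, hR, hRD⟩ := isOpen_iff.1 hD c hc
  obtain ⟨s, hs, hsρ⟩ := exists_pos_mul_lt (by positivity : 0 < ρ * R / 8) (diam D)
  set t := min (R / 8) s
  have htR : t ≤ R / 8 := min_le_left _ _
  have hts : t ≤ s := min_le_right _ _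
  refine ⟨t, by positivity, fun x hx z hz μ hμ => ?_⟩
  have hxD : ball x (R / 2) ⊆ D := (ball_subset_ball' (by linarith [mem_ball.1 hx])).trans hRD
  have hμx : dist (AffineMap.lineMap x z μ) x < 4 * t := by
    rw [dist_lineMap_left]
    have hxz : dist x z < 2 * t := by
      linarith [dist_triangle_right x z c, mem_ball.1 hx, mem_ball.1 hz]
    rw [mem_ball_zero_iff] at hμ
    nlinarith [norm_nonneg μ, dist_nonneg (x := x) (y := z)]
  have hμD : AffineMap.lineMap x z μ ∈ ball x (R / 2) := mem_ball.2 (by linarith)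
  refine ⟨hxD hμD, fun φ hφ hφD => ?_⟩
  have hmaps : MapsTo φ (ball x (R / 2)) (closedBall (φ x) (diam D)) := fun w hw =>
    mem_closedBall.2 <|
      dist_le_diam_of_mem hbdd (hφD (hxD hw)) (hφD (hxD (mem_ball_self (by linarith))))
  calc dist (φ (AffineMap.lineMap x z μ)) (φ x)
      ≤ diam D / (R / 2) * dist (AffineMap.lineMap x z μ) x :=
        Complex.dist_le_div_mul_dist_of_mapsTo_ball (hφ.mono hxD) hmaps hμD
    _ ≤ diam D / (R / 2) * (4 * s) := by gcongr; linarith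
    _ = 8 * (diam D * s) / R := by ring
    _ < ρ := by rw [div_lt_iff₀ hR]; linarith

theorem exists_ball_tendstoUniformlyOn_of_tendsto {D : Set E} (hD : IsOpen D)
    (hbdd : Bornology.IsBounded D) {c : E} (hc : c ∈ D) {p : E} {r : ℝ} (hr : 0 < r)
    {h : E → ℂ} (hhol : DifferentiableOn ℂ h (ball p r ∩ D))
    (hmaps : MapsTo h (ball p r ∩ D) (ball 0 1)) (hcont : ContinuousWithinAt h (ball p r ∩ D) p)
    (hhp : h p = 1) (hsep : ∀ ε > 0, ∃ δ > 0, ∀ w ∈ ball p r ∩ D, dist (h w) 1 < δ → dist w p < ε)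
    {ι : Type*} {l : Filter ι} {φ : ι → E → E} (hφhol : ∀ k, DifferentiableOn ℂ (φ k) D)
    (hφmaps : ∀ k, MapsTo (φ k) D D) :
    ∃ t > 0, ∀ x ∈ ball c t, Tendsto (φ · x) l (𝓝 p) →
      TendstoUniformlyOn φ (fun _ => p) l (ball c t) := by
  obtain ⟨t, ht, hline⟩ := exists_forall_dist_lineMap_lt hD hbdd hc (half_pos hr)
  refine ⟨t, ht, fun x hx hlim => ?_⟩
  have hxD : x ∈ D := by simpa using (hline x hx x hx 0 (mem_ball_self two_pos)).1
  have hφx : ∀ᶠ k in l, φ k x ∈ ball p (r / 2) := hlim (ball_mem_nhds p (half_pos hr))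
  have hhφx : Tendsto (fun k => h (φ k x)) l (𝓝 1) := by
    refine hhp ▸ hcont.tendsto.comp (tendsto_nhdsWithin_iff.2 ⟨hlim, ?_⟩)
    filter_upwards [hφx] with k hk
    exact ⟨ball_subset_ball (half_le_self hr.le) hk, hφmaps k hxD⟩
  rw [Metric.tendstoUniformlyOn_iff]
  intro ε hε
  obtain ⟨δ, hδ, hδε⟩ := hsep ε hε
  filter_upwards [hφx, (tendsto_iff_dist_tendsto_zero.1 hhφx).eventually_lt_const
    (by positivity : (0 : ℝ) < δ / 3)] with k hkx hkδ z hz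
  set U := D ∩ φ k ⁻¹' ball p r
  have hφU : MapsTo (φ k) U (ball p r ∩ D) := fun w hw => ⟨hw.2, hφmaps k hw.1⟩
  have hlineU : MapsTo (AffineMap.lineMap x z) (ball (0 : ℂ) 2) U := fun μ hμ => by
    obtain ⟨hμD, hμφ⟩ := hline x hx z hz μ hμ
    have := hμφ (φ k) (hφhol k) (hφmaps k)
    refine ⟨hμD, mem_ball.2 ?_⟩
    linarith [dist_triangle (φ k (AffineMap.lineMap x z μ)) (φ k x) p, mem_ball.1 hkx]
  have hzU : φ k z ∈ ball p r ∩ D :=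
    hφU (by simpa using hlineU (mem_ball_zero_iff.2 (by norm_num : ‖(1 : ℂ)‖ < 2)))
  have hest := dist_one_le_three_mul_of_mapsTo_lineMap
    (hhol.comp ((hφhol k).mono inter_subset_left) hφU) (hmaps.comp hφU) hlineU
  rw [dist_comm]
  exact hδε _ hzU (by simp only [Function.comp_apply] at hest; linarith)

end

theorem stmt5_general {n : ℕ} (D : Set (EuclideanSpace ℂ (Fin n)))
    (hopen : IsOpen D) (hconn : IsConnected D) (hbdd : Bornology.IsBounded D)
    (p : EuclideanSpace ℂ (Fin n)) (hp : p ∈ frontier D)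
    (r : ℝ) (hr : 0 < r)
    (h : EuclideanSpace ℂ (Fin n) → ℂ)
    (hhol : DifferentiableOn ℂ h (Metric.ball p r ∩ D))
    (hcont : ContinuousOn h (closure (Metric.ball p r ∩ D)))
    (hhp : h p = 1)
    (hpeak : ∀ z ∈ closure (Metric.ball p r ∩ D), z ≠ p → ‖h z‖ < 1)
    (a₀ : EuclideanSpace ℂ (Fin n)) (ha₀ : a₀ ∈ D)
    (φ : ℕ → EuclideanSpace ℂ (Fin n) → EuclideanSpace ℂ (Fin n))
    (hφhol : ∀ k, DifferentiableOn ℂ (φ k) D)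
    (hφmaps : ∀ k, Set.MapsTo (φ k) D D)
    (hlim : Tendsto (fun k => φ k a₀) atTop (nhds p)) :
    ∀ K ⊆ D, IsCompact K →
      TendstoUniformlyOn (fun k => φ k) (fun _ => p) atTop K := by
  have hpD : p ∉ D := fun hpD => hp.2 (hopen.interior_eq.symm ▸ hpD)
  have hpU : p ∈ closure (ball p r ∩ D) := isOpen_ball.inter_closure ⟨mem_ball_self hr, hp.1⟩
  have hne : ∀ z ∈ closure (ball p r ∩ D), z ≠ p → h z ≠ h p := fun z hz hzp hzh =>
    (hpeak z hz hzp).ne (by rw [hzh, hhp, norm_one])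
  have hmaps : MapsTo h (ball p r ∩ D) (ball 0 1) := fun z hz =>
    mem_ball_zero_iff.2 (hpeak z (subset_closure hz) (ne_of_mem_of_not_mem hz.2 hpD))
  have hsep (ε : ℝ) (hε : 0 < ε) :
      ∃ δ > 0, ∀ w ∈ ball p r ∩ D, dist (h w) 1 < δ → dist w p < ε := by
    obtain ⟨δ, hδ, hδε⟩ := (isBounded_ball.subset inter_subset_left).isCompact_closure
      |>.exists_pos_forall_dist_lt_of_apply_ne hcont hne hε
    exact ⟨δ, hδ, fun w hw => hhp ▸ hδε w (subset_closure hw)⟩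
  have hloc (c : EuclideanSpace ℂ (Fin n)) (hc : c ∈ D) :=
    exists_ball_tendstoUniformlyOn_of_tendsto hopen hbdd hc hr hhol hmaps
      ((hcont p hpU).mono subset_closure) hhp hsep hφhol hφmaps (l := atTop)
  have hpt : ∀ z ∈ D, Tendsto (φ · z) atTop (𝓝 p) := fun z hz =>
    hconn.isPreconnected.induction_of_exists_nhds (fun c hc => by
      obtain ⟨t, ht, hunif⟩ := hloc c hc
      exact ⟨ball c t, ball_mem_nhds c ht, fun x hx hx' z hz => (hunif x hx hx').tendsto_at hz⟩)
      ha₀ hlim hz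
  have hlocunif : TendstoLocallyUniformlyOn φ (fun _ => p) atTop D :=
    tendstoLocallyUniformlyOn_of_forall_exists_nhds fun c hc => by
      obtain ⟨t, ht, hunif⟩ := hloc c hc
      exact ⟨ball c t, mem_nhdsWithin_of_mem_nhds (ball_mem_nhds c ht),
        hunif c (mem_ball_self ht) (hpt c hc)⟩
  exact fun K hKD hK => (tendstoLocallyUniformlyOn_iff_tendstoUniformlyOn_of_compact hK).1
    (hlocunif.mono hKD)

/-- If `p ∈ ∂D` admits a local peak function on `B ∩ D` and `φ_k` are
automorphisms of the bounded domain `D` with `φ_k(a₀) → p`, then `φ_k → p` uniformly on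
compact subsets of `D`. -/
theorem stmt5 {n : ℕ} (D : Set (EuclideanSpace ℂ (Fin n)))
    (hopen : IsOpen D) (hconn : IsConnected D) (hbdd : Bornology.IsBounded D)
    (p : EuclideanSpace ℂ (Fin n)) (hp : p ∈ frontier D)
    (r : ℝ) (hr : 0 < r)
    (h : EuclideanSpace ℂ (Fin n) → ℂ)
    (hhol : DifferentiableOn ℂ h (Metric.ball p r ∩ D))
    (hcont : ContinuousOn h (closure (Metric.ball p r ∩ D)))
    (hhp : h p = 1)
    (hpeak : ∀ z ∈ closure (Metric.ball p r ∩ D), z ≠ p → ‖h z‖ < 1)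
    (a₀ : EuclideanSpace ℂ (Fin n)) (ha₀ : a₀ ∈ D)
    (φ ψ : ℕ → EuclideanSpace ℂ (Fin n) → EuclideanSpace ℂ (Fin n))
    (hφhol : ∀ k, DifferentiableOn ℂ (φ k) D)
    (hψhol : ∀ k, DifferentiableOn ℂ (ψ k) D)
    (hφmaps : ∀ k, Set.MapsTo (φ k) D D) (hψmaps : ∀ k, Set.MapsTo (ψ k) D D)
    (hinv₁ : ∀ k, ∀ z ∈ D, ψ k (φ k z) = z)
    (hinv₂ : ∀ k, ∀ z ∈ D, φ k (ψ k z) = z)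
    (hlim : Tendsto (fun k => φ k a₀) atTop (nhds p)) :
    ∀ K ⊆ D, IsCompact K →
      TendstoUniformlyOn (fun k => φ k) (fun _ => p) atTop K :=
  stmt5_general D hopen hconn hbdd p hp r hr h hhol hcont hhp hpeak a₀ ha₀ φ hφhol hφmaps hlim
end

section
/- Let D₁, D₂ ⊂ ℂⁿ be bounded balanced domains, and let G_m : D₁ → closure(D₂) be a sequence of holomorphic maps converging uniformly on compact subsets to a holomorphic map G with G(0) = 0. Suppose each G_m(0) = 0, each derivative G_m'(0) is invertible, and suppose D₂ is convex and that for every s ∈ ℤ₊ there exists M_s such that for all m ≥ M_s, G_m'(0) maps (1−1/s)D₁ into D₂ and G_m'(0)⁻¹ maps (1−1/s)D₂ into D₁. Then G'(0) is invertible. -/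
/-!
With `s = 2`, boundedness of `D₁` and a ball around `0` in `D₂` bound the inverses
`G_m'(0)⁻¹` uniformly in operator norm, so `‖v‖ ≤ C ‖G_m'(0) v‖` for all large `m`.
Restricting to complex lines through `0`, Weierstrass' theorem gives `G_m'(0) v → G'(0) v`,
so the same lower bound holds for `G'(0)`, which is therefore injective, hence bijective.
-/

open Filter Topology Metric

theorem ContinuousLinearMap.opNorm_le_div_of_closedBall {𝕜 E F : Type*}
    [NontriviallyNormedField 𝕜] [NormedAlgebra ℝ 𝕜] [NormedAddCommGroup E] [NormedSpace 𝕜 E]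
    [SeminormedAddCommGroup F] [NormedSpace 𝕜 F] {f : E →L[𝕜] F} {r R : ℝ} (hr : 0 < r)
    (hf : ∀ x ∈ closedBall (0 : E) r, ‖f x‖ ≤ R) : ‖f‖ ≤ R / r := by
  have hR : 0 ≤ R := (norm_nonneg _).trans (hf 0 (mem_closedBall_self hr.le))
  refine opNorm_le_of_unit_norm (div_nonneg hR hr.le) fun x hx => ?_
  have hrx : algebraMap ℝ 𝕜 r • x ∈ closedBall (0 : E) r := by
    simp [norm_smul, hx, abs_of_pos hr]
  have := hf _ hrx
  rw [map_smul, norm_smul, norm_algebraMap', Real.norm_of_nonneg hr.le] at this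
  rwa [le_div_iff₀' hr]

theorem ContinuousLinearMap.injective_of_tendsto_of_leftInverse {𝕜 E F ι : Type*}
    [NontriviallyNormedField 𝕜] [NormedAddCommGroup E] [NormedSpace 𝕜 E]
    [SeminormedAddCommGroup F] [NormedSpace 𝕜 F] {l : Filter ι} [l.NeBot]
    {A : ι → E →L[𝕜] F} {a : E →L[𝕜] F} {T : ι → F →L[𝕜] E} {C : ℝ}
    (hA : ∀ v, Tendsto (fun i => A i v) l (𝓝 (a v)))
    (hT : ∀ i, Function.LeftInverse (T i) (A i)) (hC : ∀ᶠ i in l, ‖T i‖ ≤ C) :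
    Function.Injective a := by
  refine (injective_iff_map_eq_zero a).2 fun v hv => norm_le_zero_iff.1 ?_
  have hlower : ∀ᶠ i in l, ‖v‖ ≤ C * ‖A i v‖ := by
    filter_upwards [hC] with i hi
    calc ‖v‖ = ‖T i (A i v)‖ := by rw [hT i]
      _ ≤ ‖T i‖ * ‖A i v‖ := (T i).le_opNorm _
      _ ≤ C * ‖A i v‖ := by gcongr
  simpa [hv] using ge_of_tendsto ((hA v).norm.const_mul C) hlower

theorem tendsto_fderiv_apply_of_tendstoLocallyUniformlyOn {E F ι : Type*}
    [NormedAddCommGroup E] [NormedSpace ℂ E] [NormedAddCommGroup F] [NormedSpace ℂ F]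
    [CompleteSpace F] {l : Filter ι} {U : Set E} {G : ι → E → F} {g : E → F} {x : E}
    (hU : IsOpen U) (hx : x ∈ U) (hconv : TendstoLocallyUniformlyOn G g l U)
    (hG : ∀ᶠ i in l, DifferentiableOn ℂ (G i) U) (hg : DifferentiableAt ℂ g x) (v : E) :
    Tendsto (fun i => fderiv ℂ (G i) x v) l (𝓝 (fderiv ℂ g x v)) := by
  set φ : ℂ → E := fun t => x + t • v
  have hφ : Continuous φ := by fun_prop
  have hφU : Set.MapsTo φ (φ ⁻¹' U) U := Set.mapsTo_preimage φ U
  have hline := ((hconv.comp φ hφU hφ.continuousOn).deriv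
    (hG.mono fun i hi => hi.comp (by fun_prop) hφU) (hU.preimage hφ)).tendsto_at
    (show φ 0 ∈ U by simpa [φ] using hx)
  rw [← hg.lineDeriv_eq_fderiv]
  refine hline.congr' ?_
  filter_upwards [hG] with i hi
  exact (hi.differentiableAt (hU.mem_nhds hx)).lineDeriv_eq_fderiv

theorem stmt7_general {n : ℕ} (D₁ D₂ : Set (EuclideanSpace ℂ (Fin n)))
    (h1open : IsOpen D₁) (h1conn : IsConnected D₁) (h1bdd : Bornology.IsBounded D₁)
    (h2open : IsOpen D₂)
    (G : ℕ → EuclideanSpace ℂ (Fin n) → EuclideanSpace ℂ (Fin n))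
    (g : EuclideanSpace ℂ (Fin n) → EuclideanSpace ℂ (Fin n))
    (hGhol : ∀ m, DifferentiableOn ℂ (G m) D₁)
    (hghol : DifferentiableOn ℂ g D₁)
    (hconv : ∀ K ⊆ D₁, IsCompact K →
      TendstoUniformlyOn (fun m => G m) g atTop K)
    (T : ℕ → EuclideanSpace ℂ (Fin n) →L[ℂ] EuclideanSpace ℂ (Fin n))
    (hTleft : ∀ m x, T m (fderiv ℂ (G m) 0 x) = x)
    (hscale : ∀ s : ℕ, 0 < s → ∃ M : ℕ, ∀ m ≥ M,
      (∀ z ∈ D₁, fderiv ℂ (G m) 0 ((1 - 1 / (s : ℝ)) • z) ∈ D₂) ∧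
      (∀ w ∈ D₂, T m ((1 - 1 / (s : ℝ)) • w) ∈ D₁)) :
    Function.Bijective (fderiv ℂ g 0) := by
  obtain ⟨h0D₁, h0D₂⟩ :
      (0 : EuclideanSpace ℂ (Fin n)) ∈ D₁ ∧ (0 : EuclideanSpace ℂ (Fin n)) ∈ D₂ := by
    obtain ⟨z, hz⟩ := h1conn.nonempty
    obtain ⟨M, hM⟩ := hscale 1 one_pos
    have h0D₂ : (0 : EuclideanSpace ℂ (Fin n)) ∈ D₂ := by simpa using (hM M le_rfl).1 z hz
    exact ⟨by simpa using (hM M le_rfl).2 0 h0D₂, h0D₂⟩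
  obtain ⟨R, hR⟩ := h1bdd.subset_closedBall 0
  obtain ⟨r, hr, hrD₂⟩ := nhds_basis_closedBall.mem_iff.1 (h2open.mem_nhds h0D₂)
  have hTbound : ∀ᶠ m in atTop, ‖T m‖ ≤ R / (r / 2) := by
    obtain ⟨M, hM⟩ := hscale 2 two_pos
    filter_upwards [eventually_ge_atTop M] with m hm
    refine (T m).opNorm_le_div_of_closedBall (half_pos hr) fun y hy => ?_
    have h2y : (2 : ℝ) • y ∈ D₂ := hrD₂ (by
      rw [mem_closedBall_zero_iff, norm_smul, Real.norm_two]
      linarith [mem_closedBall_zero_iff.1 hy])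
    have hTy := (hM m hm).2 _ h2y
    rw [smul_smul] at hTy
    norm_num at hTy
    exact mem_closedBall_zero_iff.1 (hR hTy)
  have hderiv (v) : Tendsto (fun m => fderiv ℂ (G m) 0 v) atTop (𝓝 (fderiv ℂ g 0 v)) :=
    tendsto_fderiv_apply_of_tendstoLocallyUniformlyOn h1open h0D₁
      ((tendstoLocallyUniformlyOn_iff_forall_isCompact h1open).2 hconv)
      (Eventually.of_forall hGhol) (hghol.differentiableAt (h1open.mem_nhds h0D₁)) v
  have hinj := ContinuousLinearMap.injective_of_tendsto_of_leftInverse hderiv hTleft hTbound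
  exact ⟨hinj, LinearMap.injective_iff_surjective.1 hinj⟩

/-- Under locally uniform convergence `G_m → G` with `G_m(0) = G(0) = 0`,
invertible derivatives `G_m'(0)`, and the hypothesis that for every `s` and all large `m`,
`G_m'(0)` maps `(1-1/s)D₁` into `D₂` and `G_m'(0)⁻¹` maps `(1-1/s)D₂` into `D₁`,
the limit derivative `G'(0)` is invertible. -/
theorem stmt7 {n : ℕ} (D₁ D₂ : Set (EuclideanSpace ℂ (Fin n)))
    (h1open : IsOpen D₁) (h1conn : IsConnected D₁) (h1bdd : Bornology.IsBounded D₁)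
    (h1bal : ∀ z ∈ D₁, ∀ ζ : ℂ, ‖ζ‖ ≤ 1 → ζ • z ∈ D₁)
    (h2open : IsOpen D₂) (h2conn : IsConnected D₂) (h2bdd : Bornology.IsBounded D₂)
    (h2bal : ∀ w ∈ D₂, ∀ ζ : ℂ, ‖ζ‖ ≤ 1 → ζ • w ∈ D₂)
    (h2conv : Convex ℝ D₂)
    (G : ℕ → EuclideanSpace ℂ (Fin n) → EuclideanSpace ℂ (Fin n))
    (g : EuclideanSpace ℂ (Fin n) → EuclideanSpace ℂ (Fin n))
    (hGhol : ∀ m, DifferentiableOn ℂ (G m) D₁)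
    (hGmaps : ∀ m, Set.MapsTo (G m) D₁ (closure D₂))
    (hG0 : ∀ m, G m 0 = 0)
    (hghol : DifferentiableOn ℂ g D₁) (hg0 : g 0 = 0)
    (hconv : ∀ K ⊆ D₁, IsCompact K →
      TendstoUniformlyOn (fun m => G m) g atTop K)
    (T : ℕ → EuclideanSpace ℂ (Fin n) →L[ℂ] EuclideanSpace ℂ (Fin n))
    (hTleft : ∀ m x, T m (fderiv ℂ (G m) 0 x) = x)
    (hTright : ∀ m x, fderiv ℂ (G m) 0 (T m x) = x)
    (hscale : ∀ s : ℕ, 0 < s → ∃ M : ℕ, ∀ m ≥ M,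
      (∀ z ∈ D₁, fderiv ℂ (G m) 0 ((1 - 1 / (s : ℝ)) • z) ∈ D₂) ∧
      (∀ w ∈ D₂, T m ((1 - 1 / (s : ℝ)) • w) ∈ D₁)) :
    Function.Bijective (fderiv ℂ g 0) :=
  stmt7_general D₁ D₂ h1open h1conn h1bdd h2open G g hGhol hghol hconv T hTleft hscale
end

section
/- Let V be a finite-dimensional positive Hermitian Jordan triple system and let x ∈ V \ {0} have spectral decomposition x = λ₁e₁ + ⋯ + λ_s e_s with λ₁ > ⋯ > λ_s > 0 and e₁,…,e_s pairwise orthogonal nonzero tripotents. Then the map x ↦ λ₁(x), extended by λ₁(0) = 0, defines a norm on V (the spectral norm); in particular it is subadditive and satisfies λ₁(cx) = |c|λ₁(x) for c ∈ ℂ. -/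
/-- A Hermitian Jordan triple system on a complex vector space `V`: a triple product
`{x,y,z}`, symmetric and `ℂ`-bilinear in `(x,z)`, conjugate-linear in `y`, satisfying
the Jordan identity. -/
structure HJTS (V : Type*) [AddCommGroup V] [Module ℂ V] where
  trip : V → V → V → V
  symm : ∀ x y z, trip x y z = trip z y x
  add_left : ∀ x x' y z, trip (x + x') y z = trip x y z + trip x' y z
  smul_left : ∀ (a : ℂ) (x y z : V), trip (a • x) y z = a • trip x y z
  add_mid : ∀ x y y' z, trip x (y + y') z = trip x y z + trip x y' z
  smul_mid : ∀ (a : ℂ) (x y z : V), trip x (a • y) z = (starRingEnd ℂ a) • trip x y z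
  jordan : ∀ x y u v w,
    trip x y (trip u v w) - trip u v (trip x y w)
      = trip (trip x y u) v w - trip u (trip y x v) w

variable {V : Type*} [AddCommGroup V] [Module ℂ V]

/-- Positivity: `{x,x,x} = λx` with `x ≠ 0` forces `λ > 0`. -/
def HJTS.IsPositive (J : HJTS V) : Prop :=
  ∀ x : V, x ≠ 0 → ∀ c : ℝ, J.trip x x x = (c : ℂ) • x → 0 < c

/-- A tripotent: `{e,e,e} = 2e` (i.e. `Q(e)e = e` with `Q(x)y := {x,y,x}/2`). -/
def HJTS.IsTripotent (J : HJTS V) (e : V) : Prop :=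
  J.trip e e e = (2 : ℂ) • e

/-- Orthogonality of tripotents: `D(e₁,e₂) = 0` where `D(x,y)z := {x,y,z}`. -/
def HJTS.Orthog (J : HJTS V) (e₁ e₂ : V) : Prop :=
  ∀ z : V, J.trip e₁ e₂ z = 0

/-!
The trace form `B(x, y) = tr D(x, y)` satisfies `B({a,b,x}, y) = B(x, {b,a,y})`. For a tripotent
`e`, `D(e,e)` is diagonalizable with eigenvalues `0, 1, 2` (the Peirce decomposition), its
eigenspaces are `B`-orthogonal, and `e` lies in the `2`-eigenspace, so `B(e,e) > 0` when `e ≠ 0`;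
as every vector is a real combination of orthogonal tripotents, `B` is positive semidefinite.

For `v` fixed, `q_v(x, y) = B({x,y,v}, v)` is sesquilinear with `Re q_v(x,x) ≥ 0`. If
`x = ∑ λᵢ eᵢ`, then `Re q_v(x,x) ≤ 2 (max |λᵢ|)² B(v,v)`, with equality at `v = e₁`. Hence `λ₁(x)`
is the least `μ ≥ 0` with `√(Re q_v(x,x)) ≤ μ √(2 Re B(v,v))` for all `v`, and absolute homogeneity
and the triangle inequality are inherited from the seminorms `√(Re q_v(x,x))`.
-/

theorem LinearMap.sqrt_re_apply_add_le {E : Type*} [AddCommGroup E] [Module ℂ E]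
    (f : E →ₗ[ℂ] E →ₗ⋆[ℂ] ℂ) (hf : ∀ x, 0 ≤ (f x x).re) (x y : E) :
    √(f (x + y) (x + y)).re ≤ √(f x x).re + √(f y y).re := by
  set A := (f x x).re
  set C := (f y y).re
  set m := (f x y + f y x).re
  have hexpand (t : ℝ) :
      (f (x + (t : ℂ) • y) (x + (t : ℂ) • y)).re = C * (t * t) + m * t + A := by
    simp only [map_add, map_smul, map_smulₛₗ, LinearMap.add_apply, LinearMap.smul_apply,
      Complex.conj_ofReal, smul_eq_mul, Complex.add_re, Complex.re_ofReal_mul, A, C, m]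
    ring
  have hdisc : m ^ 2 ≤ (2 * √A * √C) ^ 2 := by
    have := discrim_le_zero fun t ↦ (hexpand t).symm ▸ hf (x + (t : ℂ) • y)
    rw [discrim] at this
    nlinarith [Real.sq_sqrt (hf x), Real.sq_sqrt (hf y)]
  have hm : m ≤ 2 * √A * √C := le_of_sq_le_sq hdisc (by positivity)
  rw [Real.sqrt_le_left (by positivity)]
  have h1 := hexpand 1
  simp only [Complex.ofReal_one, one_smul] at h1
  nlinarith [Real.sq_sqrt (hf x), Real.sq_sqrt (hf y)]

namespace HJTS

section Basic

variable (J : HJTS V)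

theorem trip_add_right (x y z z' : V) : J.trip x y (z + z') = J.trip x y z + J.trip x y z' := by
  rw [J.symm, J.add_left, J.symm, J.symm z']

theorem trip_smul_right (a : ℂ) (x y z : V) : J.trip x y (a • z) = a • J.trip x y z := by
  rw [J.symm, J.smul_left, J.symm]

def D : V →ₗ[ℂ] V →ₗ⋆[ℂ] Module.End ℂ V :=
  LinearMap.mk₂'ₛₗ _ _
    (fun x y ↦ ⟨⟨J.trip x y, J.trip_add_right x y⟩, fun a z ↦ J.trip_smul_right a x y z⟩)
    (fun x x' y ↦ LinearMap.ext (J.add_left x x' y))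
    (fun a x y ↦ LinearMap.ext (J.smul_left a x y))
    (fun x y y' ↦ LinearMap.ext (J.add_mid x y y'))
    (fun a x y ↦ LinearMap.ext (J.smul_mid a x y))

@[simp]
theorem D_apply (x y z : V) : J.D x y z = J.trip x y z := rfl

theorem trip_sub_right (x y z z' : V) : J.trip x y (z - z') = J.trip x y z - J.trip x y z' :=
  (J.D x y).map_sub z z'

theorem trip_sum_right {ι : Type*} (s : Finset ι) (x y : V) (f : ι → V) :
    J.trip x y (∑ i ∈ s, f i) = ∑ i ∈ s, J.trip x y (f i) :=
  map_sum (J.D x y) f s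

theorem D_mul_sub_mul (x y u v : V) :
    J.D x y * J.D u v - J.D u v * J.D x y = J.D (J.trip x y u) v - J.D u (J.trip y x v) :=
  LinearMap.ext (J.jordan x y u v)

noncomputable def traceForm : V →ₗ[ℂ] V →ₗ⋆[ℂ] ℂ :=
  J.D.compr₂ₛₗ (LinearMap.trace ℂ V)

theorem traceForm_apply (x y : V) : J.traceForm x y = LinearMap.trace ℂ V (J.D x y) := rfl

theorem traceForm_trip_left (a b x y : V) :
    J.traceForm (J.trip a b x) y = J.traceForm x (J.trip b a y) := by
  have h := congrArg (LinearMap.trace ℂ V) (J.D_mul_sub_mul a b x y)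
  rw [map_sub, map_sub, LinearMap.trace_mul_comm, sub_self, eq_comm, sub_eq_zero] at h
  exact h

theorem traceForm_eq_zero_of_orthog {x y : V} (h : J.Orthog x y) : J.traceForm x y = 0 := by
  rw [traceForm_apply, show J.D x y = 0 from LinearMap.ext h, map_zero]

theorem traceForm_eq_zero_of_eigen {u x y : V} {a b : ℝ} (hx : J.trip u u x = (a : ℂ) • x)
    (hy : J.trip u u y = (b : ℂ) • y) (hab : a ≠ b) : J.traceForm x y = 0 := by
  have h := J.traceForm_trip_left u u x y
  rw [hx, hy, map_smul, map_smulₛₗ, Complex.conj_ofReal, LinearMap.smul_apply, smul_eq_mul,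
    smul_eq_mul] at h
  exact (mul_eq_mul_right_iff.mp h).resolve_left (by exact_mod_cast hab)

noncomputable def quadForm (v : V) : V →ₗ[ℂ] V →ₗ⋆[ℂ] ℂ :=
  J.D.compr₂ₛₗ (J.traceForm.flip v ∘ₗ LinearMap.applyₗ v)

theorem quadForm_apply (v x y : V) : J.quadForm v x y = J.traceForm (J.trip x y v) v := rfl

end Basic

variable {J : HJTS V}

section Tripotent

variable {e : V}

-- `quad` refers to `z ↦ {e, z, e}`, twice the quadratic representation `Q(e)`.
theorem IsTripotent.trip_self_quad (he : J.IsTripotent e) (z : V) :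
    J.trip e e (J.trip e z e) = (2 : ℂ) • J.trip e z e := by
  have h1 := J.jordan e e e z e
  have h2 := J.jordan e z e e e
  rw [he, trip_smul_right, J.smul_left] at h1
  rw [he, trip_smul_right, J.symm (J.trip e z e) e e, J.symm z e e] at h2
  have h3 : (3 : ℂ) • J.trip e e (J.trip e z e) = (3 : ℂ) • (2 : ℂ) • J.trip e z e := by
    linear_combination (norm := module) h1 - h2
  exact smul_right_injective V three_ne_zero h3

theorem IsTripotent.quad_quad (he : J.IsTripotent e) (w : V) :
    J.trip e (J.trip e w e) e = (2 : ℂ) • J.trip e e (J.trip e e w) - (2 : ℂ) • J.trip e e w := by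
  have h := J.jordan w e e e e
  rw [he, trip_smul_right, J.symm w e e, J.symm (J.trip e e w) e e] at h
  linear_combination (norm := module) h

theorem IsTripotent.trip_self_cube (he : J.IsTripotent e) (w : V) :
    J.trip e e (J.trip e e (J.trip e e w))
      = (3 : ℂ) • J.trip e e (J.trip e e w) - (2 : ℂ) • J.trip e e w := by
  have h := he.trip_self_quad (J.trip e w e)
  rw [he.quad_quad, trip_sub_right, trip_smul_right, trip_smul_right] at h
  have h2 : (2 : ℂ) • J.trip e e (J.trip e e (J.trip e e w))
      = (2 : ℂ) • ((3 : ℂ) • J.trip e e (J.trip e e w) - (2 : ℂ) • J.trip e e w) := by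
    linear_combination (norm := module) h
  exact smul_right_injective V two_ne_zero h2

variable (J) in
noncomputable def peirce₁ (e : V) : Module.End ℂ V :=
  (2 : ℂ) • J.D e e - J.D e e * J.D e e

variable (J) in
noncomputable def peirce₂ (e : V) : Module.End ℂ V :=
  (2⁻¹ : ℂ) • (J.D e e * J.D e e - J.D e e)

theorem peirce₁_apply (v : V) :
    J.peirce₁ e v = (2 : ℂ) • J.trip e e v - J.trip e e (J.trip e e v) := rfl

theorem peirce₂_apply (v : V) :
    J.peirce₂ e v = (2⁻¹ : ℂ) • (J.trip e e (J.trip e e v) - J.trip e e v) := rfl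

theorem D_self_eq_peirce : J.D e e = J.peirce₁ e + (2 : ℂ) • J.peirce₂ e := by
  ext v
  simp only [LinearMap.add_apply, LinearMap.smul_apply, peirce₁_apply, peirce₂_apply, D_apply]
  module

theorem IsTripotent.trip_peirce₁ (he : J.IsTripotent e) (v : V) :
    J.trip e e (J.peirce₁ e v) = J.peirce₁ e v := by
  rw [peirce₁_apply, trip_sub_right, trip_smul_right, he.trip_self_cube]
  module

theorem IsTripotent.trip_peirce₂ (he : J.IsTripotent e) (v : V) :
    J.trip e e (J.peirce₂ e v) = (2 : ℂ) • J.peirce₂ e v := by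
  rw [peirce₂_apply, trip_smul_right, trip_sub_right, he.trip_self_cube]
  module

theorem IsTripotent.isIdempotentElem_peirce₁ (he : J.IsTripotent e) :
    IsIdempotentElem (J.peirce₁ e) := by
  ext v
  rw [Module.End.mul_apply, peirce₁_apply (J.peirce₁ e v), he.trip_peirce₁, he.trip_peirce₁]
  module

theorem IsTripotent.isIdempotentElem_peirce₂ (he : J.IsTripotent e) :
    IsIdempotentElem (J.peirce₂ e) := by
  ext v
  rw [Module.End.mul_apply, peirce₂_apply (J.peirce₂ e v), he.trip_peirce₂, trip_smul_right,
    he.trip_peirce₂]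
  module

theorem IsTripotent.peirce₂_self (he : J.IsTripotent e) : J.peirce₂ e e = e := by
  rw [peirce₂_apply, he, trip_smul_right, he]
  module

theorem IsTripotent.traceForm_self [FiniteDimensional ℂ V] (he : J.IsTripotent e) :
    J.traceForm e e = ((Module.finrank ℂ (LinearMap.range (J.peirce₁ e))
      + 2 * Module.finrank ℂ (LinearMap.range (J.peirce₂ e)) : ℕ) : ℂ) := by
  rw [traceForm_apply, D_self_eq_peirce, map_add, map_smul, smul_eq_mul,
    (LinearMap.IsIdempotentElem.isProj_range _ he.isIdempotentElem_peirce₁).trace,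
    (LinearMap.IsIdempotentElem.isProj_range _ he.isIdempotentElem_peirce₂).trace]
  norm_cast

theorem IsTripotent.traceForm_self_re_nonneg [FiniteDimensional ℂ V] (he : J.IsTripotent e) :
    0 ≤ (J.traceForm e e).re := by
  rw [he.traceForm_self, Complex.natCast_re]
  positivity

theorem IsTripotent.traceForm_self_re_pos [FiniteDimensional ℂ V] (he : J.IsTripotent e)
    (hne : e ≠ 0) : 0 < (J.traceForm e e).re := by
  have hpos : 0 < Module.finrank ℂ (LinearMap.range (J.peirce₂ e)) :=
    Module.finrank_pos_iff_exists_ne_zero.mpr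
      ⟨⟨e, e, he.peirce₂_self⟩, fun h ↦ hne (congrArg Subtype.val h)⟩
  rw [he.traceForm_self, Complex.natCast_re]
  positivity

theorem traceForm_sum_smul_eigen {ι : Type*} [Fintype ι] {u : V} {w : ι → V} {a : ι → ℝ}
    (ha : Function.Injective a) (hw : ∀ k, J.trip u u (w k) = (a k : ℂ) • w k) (c : ι → ℂ) :
    J.traceForm (∑ k, c k • w k) (∑ k, w k) = ∑ k, c k * J.traceForm (w k) (w k) := by
  simp only [map_sum, map_smul, LinearMap.sum_apply, LinearMap.smul_apply, smul_eq_mul]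
  refine Finset.sum_congr rfl fun j _ ↦ ?_
  rw [Finset.sum_eq_single j
    (fun k _ hkj ↦ by rw [J.traceForm_eq_zero_of_eigen (hw k) (hw j) (ha.ne hkj), mul_zero])
    (by simp)]

theorem IsTripotent.exists_peirce_decomp (he : J.IsTripotent e) (v : V) :
    ∃ w : Fin 3 → V, v = ∑ k, w k ∧ ∀ k, J.trip e e (w k) = (((k : ℕ) : ℝ) : ℂ) • w k := by
  have hv : J.trip e e v = J.peirce₁ e v + (2 : ℂ) • J.peirce₂ e v := by
    rw [← D_apply, D_self_eq_peirce]; rfl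
  refine ⟨![v - J.peirce₁ e v - J.peirce₂ e v, J.peirce₁ e v, J.peirce₂ e v], ?_, ?_⟩
  · simp only [Fin.sum_univ_three, Matrix.cons_val]
    abel
  · intro k
    fin_cases k
    · simp only [Fin.zero_eta, Nat.cast_zero, Complex.ofReal_zero, zero_smul,
        Matrix.cons_val_zero, trip_sub_right, hv, he.trip_peirce₁, he.trip_peirce₂]
      module
    · simpa using he.trip_peirce₁ v
    · simpa using he.trip_peirce₂ v

theorem IsTripotent.quadForm_re_mem_Icc (he : J.IsTripotent e)
    (hB : ∀ w, 0 ≤ (J.traceForm w w).re) (v : V) :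
    (J.quadForm v e e).re ∈ Set.Icc 0 (2 * (J.traceForm v v).re) := by
  obtain ⟨w, rfl, hw⟩ := he.exists_peirce_decomp v
  have ha : Function.Injective fun k : Fin 3 ↦ ((k : ℕ) : ℝ) :=
    Nat.cast_injective.comp Fin.val_injective
  have hq := traceForm_sum_smul_eigen ha hw fun k ↦ (((k : ℕ) : ℝ) : ℂ)
  have hvv := traceForm_sum_smul_eigen ha hw 1
  simp only [Pi.one_apply, one_smul, one_mul] at hvv
  rw [quadForm_apply, trip_sum_right]
  simp only [hw]
  rw [hq, hvv, Complex.re_sum, Complex.re_sum, Finset.mul_sum]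
  simp only [Complex.re_ofReal_mul]
  exact ⟨Finset.sum_nonneg fun k _ ↦ mul_nonneg (Nat.cast_nonneg _) (hB _),
    Finset.sum_le_sum fun k _ ↦
      mul_le_mul_of_nonneg_right (by exact_mod_cast Nat.le_of_lt_succ k.isLt) (hB _)⟩

end Tripotent

variable (J) in
structure IsOrthogFamily {ι : Type*} (e : ι → V) : Prop where
  isTripotent : ∀ i, J.IsTripotent (e i)
  orthog : Pairwise fun i j ↦ J.Orthog (e i) (e j)

section OrthogFamily

variable {ι : Type*} [Fintype ι] {e : ι → V}

theorem trip_sum_smul_self (horth : Pairwise fun i j ↦ J.Orthog (e i) (e j)) (l : ι → ℝ)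
    (v : V) :
    J.trip (∑ i, (l i : ℂ) • e i) (∑ i, (l i : ℂ) • e i) v
      = ∑ i, (l i : ℂ) ^ 2 • J.trip (e i) (e i) v := by
  rw [← D_apply]
  simp only [map_sum, map_smul, map_smulₛₗ, LinearMap.sum_apply, LinearMap.smul_apply, D_apply,
    Complex.conj_ofReal]
  refine Finset.sum_congr rfl fun i _ ↦ ?_
  rw [Finset.sum_eq_single i (fun j _ hji ↦ by rw [horth hji v, smul_zero])
    (by simp), smul_smul, sq]

theorem traceForm_sum_smul_self (horth : Pairwise fun i j ↦ J.Orthog (e i) (e j)) (l : ι → ℝ) :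
    J.traceForm (∑ i, (l i : ℂ) • e i) (∑ i, (l i : ℂ) • e i)
      = ∑ i, (l i : ℂ) ^ 2 * J.traceForm (e i) (e i) := by
  simp only [map_sum, map_smul, map_smulₛₗ, LinearMap.sum_apply, LinearMap.smul_apply,
    Complex.conj_ofReal, smul_eq_mul]
  refine Finset.sum_congr rfl fun i _ ↦ ?_
  rw [Finset.sum_eq_single i
    (fun j _ hji ↦ by rw [J.traceForm_eq_zero_of_orthog (horth hji), mul_zero])
    (by simp)]
  ring

theorem quadForm_sum_smul_self (horth : Pairwise fun i j ↦ J.Orthog (e i) (e j)) (l : ι → ℝ)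
    (v : V) :
    J.quadForm v (∑ i, (l i : ℂ) • e i) (∑ i, (l i : ℂ) • e i)
      = ∑ i, (l i : ℂ) ^ 2 * J.quadForm v (e i) (e i) := by
  rw [quadForm_apply, trip_sum_smul_self horth]
  simp only [quadForm_apply, map_sum, map_smul, LinearMap.sum_apply, LinearMap.smul_apply,
    smul_eq_mul]

theorem IsOrthogFamily.isTripotent_sum (hf : J.IsOrthogFamily e) : J.IsTripotent (∑ i, e i) := by
  have h := trip_sum_smul_self hf.orthog (fun _ ↦ 1) (∑ i, e i)
  simp only [Complex.ofReal_one, one_smul, one_pow] at h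
  rw [IsTripotent, h, Finset.smul_sum]
  refine Finset.sum_congr rfl fun i _ ↦ ?_
  rw [trip_sum_right, Finset.sum_eq_single i
    (fun j _ hji ↦ by rw [J.symm, hf.orthog hji]) (by simp), hf.isTripotent i]

theorem IsOrthogFamily.traceForm_re_nonneg [FiniteDimensional ℂ V] (hf : J.IsOrthogFamily e)
    (l : ι → ℝ) : 0 ≤ (J.traceForm (∑ i, (l i : ℂ) • e i) (∑ i, (l i : ℂ) • e i)).re := by
  rw [traceForm_sum_smul_self hf.orthog, Complex.re_sum]
  refine Finset.sum_nonneg fun i _ ↦ ?_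
  rw [← Complex.ofReal_pow, Complex.re_ofReal_mul]
  exact mul_nonneg (sq_nonneg _) (hf.isTripotent i).traceForm_self_re_nonneg

theorem IsOrthogFamily.quadForm_re_nonneg (hf : J.IsOrthogFamily e)
    (hB : ∀ w, 0 ≤ (J.traceForm w w).re) (l : ι → ℝ) (v : V) :
    0 ≤ (J.quadForm v (∑ i, (l i : ℂ) • e i) (∑ i, (l i : ℂ) • e i)).re := by
  rw [quadForm_sum_smul_self hf.orthog, Complex.re_sum]
  refine Finset.sum_nonneg fun i _ ↦ ?_
  rw [← Complex.ofReal_pow, Complex.re_ofReal_mul]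
  exact mul_nonneg (sq_nonneg _) ((hf.isTripotent i).quadForm_re_mem_Icc hB v).1

theorem IsOrthogFamily.quadForm_re_le (hf : J.IsOrthogFamily e)
    (hB : ∀ w, 0 ≤ (J.traceForm w w).re) {l : ι → ℝ} {μ : ℝ} (hl : ∀ i, |l i| ≤ μ) (v : V) :
    (J.quadForm v (∑ i, (l i : ℂ) • e i) (∑ i, (l i : ℂ) • e i)).re
      ≤ 2 * μ ^ 2 * (J.traceForm v v).re := by
  have hsum := (hf.isTripotent_sum.quadForm_re_mem_Icc hB v).2
  have hone := quadForm_sum_smul_self hf.orthog (fun _ ↦ 1) v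
  simp only [Complex.ofReal_one, one_smul, one_pow, one_mul] at hone
  rw [hone, Complex.re_sum] at hsum
  have hterm i := ((hf.isTripotent i).quadForm_re_mem_Icc hB v).1
  rw [quadForm_sum_smul_self hf.orthog, Complex.re_sum]
  calc ∑ i, ((l i : ℂ) ^ 2 * J.quadForm v (e i) (e i)).re
      ≤ ∑ i, μ ^ 2 * (J.quadForm v (e i) (e i)).re := by
        refine Finset.sum_le_sum fun i _ ↦ ?_
        rw [← Complex.ofReal_pow, Complex.re_ofReal_mul, ← sq_abs]
        gcongr
        exacts [hterm i, hl i]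
    _ ≤ 2 * μ ^ 2 * (J.traceForm v v).re := by
        rw [← Finset.mul_sum]
        nlinarith [sq_nonneg μ]

theorem IsOrthogFamily.quadForm_apply_self (hf : J.IsOrthogFamily e) (l : ι → ℝ) (i : ι) :
    J.quadForm (e i) (∑ j, (l j : ℂ) • e j) (∑ j, (l j : ℂ) • e j)
      = 2 * (l i : ℂ) ^ 2 * J.traceForm (e i) (e i) := by
  rw [quadForm_apply, trip_sum_smul_self hf.orthog, Finset.sum_eq_single i
    (fun j _ hji ↦ by rw [J.symm, hf.orthog hji.symm, smul_zero]) (by simp),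
    hf.isTripotent i, smul_smul, map_smul, LinearMap.smul_apply, smul_eq_mul, mul_comm _ (2 : ℂ)]

end OrthogFamily

variable (J) in
def normBounds (z : V) : Set ℝ :=
  {μ | 0 ≤ μ ∧ ∀ v, √(J.quadForm v z z).re ≤ μ * √(2 * (J.traceForm v v).re)}

theorem isLeast_normBounds_zero : IsLeast (J.normBounds 0) 0 :=
  ⟨⟨le_rfl, fun v ↦ by simp⟩, fun _ hμ ↦ hμ.1⟩

theorem smul_mem_normBounds {z : V} {μ : ℝ} (h : μ ∈ J.normBounds z) (c : ℂ) :
    ‖c‖ * μ ∈ J.normBounds (c • z) := by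
  refine ⟨mul_nonneg (norm_nonneg c) h.1, fun v ↦ ?_⟩
  have hq : J.quadForm v (c • z) (c • z) = (‖c‖ ^ 2 : ℝ) * J.quadForm v z z := by
    simp only [map_smul, map_smulₛₗ, LinearMap.smul_apply, smul_eq_mul]
    rw [← mul_assoc, Complex.conj_mul', Complex.ofReal_pow]
  rw [hq, Complex.re_ofReal_mul, Real.sqrt_mul (sq_nonneg _), Real.sqrt_sq (norm_nonneg c),
    mul_assoc]
  exact mul_le_mul_of_nonneg_left (h.2 v) (norm_nonneg c)

theorem add_mem_normBounds (hq : ∀ v z, 0 ≤ (J.quadForm v z z).re) {x y : V} {μ ν : ℝ}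
    (hx : μ ∈ J.normBounds x) (hy : ν ∈ J.normBounds y) : μ + ν ∈ J.normBounds (x + y) :=
  ⟨add_nonneg hx.1 hy.1, fun v ↦ (LinearMap.sqrt_re_apply_add_le _ (hq v) x y).trans <| by
    rw [add_mul]; exact add_le_add (hx.2 v) (hy.2 v)⟩

theorem IsOrthogFamily.isLeast_normBounds [FiniteDimensional ℂ V] {ι : Type*} [Fintype ι]
    {e : ι → V} (hf : J.IsOrthogFamily e) (hB : ∀ w, 0 ≤ (J.traceForm w w).re) {l : ι → ℝ}
    {i₀ : ι} (hl : ∀ i, |l i| ≤ l i₀) (hne : e i₀ ≠ 0) :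
    IsLeast (J.normBounds (∑ i, (l i : ℂ) • e i)) (l i₀) := by
  have hl₀ : 0 ≤ l i₀ := (abs_nonneg _).trans (hl i₀)
  have hsqrt (K : ℝ) : √(2 * l i₀ ^ 2 * K) = l i₀ * √(2 * K) := by
    rw [show 2 * l i₀ ^ 2 * K = l i₀ ^ 2 * (2 * K) by ring, Real.sqrt_mul (sq_nonneg _),
      Real.sqrt_sq hl₀]
  refine ⟨⟨hl₀, fun v ↦ ?_⟩, fun μ hμ ↦ ?_⟩
  · rw [← hsqrt]
    exact Real.sqrt_le_sqrt (hf.quadForm_re_le hB hl v)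
  · have h := hμ.2 (e i₀)
    rw [hf.quadForm_apply_self, ← Complex.ofReal_pow, ← Complex.ofReal_ofNat,
      ← Complex.ofReal_mul, Complex.re_ofReal_mul, hsqrt] at h
    have hK := (hf.isTripotent i₀).traceForm_self_re_pos hne
    exact le_of_mul_le_mul_right h (by positivity)

section SpectralNorm

variable {σ : V → ℝ} (hσ : ∀ z, IsLeast (J.normBounds z) (σ z))
include hσ

theorem apply_smul_le_of_isLeast_normBounds (c : ℂ) (z : V) : σ (c • z) ≤ ‖c‖ * σ z :=
  (hσ _).2 (smul_mem_normBounds (hσ z).1 c)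

theorem apply_smul_of_isLeast_normBounds (c : ℂ) (z : V) : σ (c • z) = ‖c‖ * σ z := by
  rcases eq_or_ne c 0 with rfl | hc
  · simp [(hσ 0).unique isLeast_normBounds_zero]
  refine (apply_smul_le_of_isLeast_normBounds hσ c z).antisymm ?_
  calc ‖c‖ * σ z = ‖c‖ * σ (c⁻¹ • c • z) := by rw [inv_smul_smul₀ hc]
    _ ≤ ‖c‖ * (‖c⁻¹‖ * σ (c • z)) := by
        gcongr; exact apply_smul_le_of_isLeast_normBounds hσ _ _
    _ = σ (c • z) := by
        rw [norm_inv, ← mul_assoc, mul_inv_cancel₀ (norm_ne_zero_iff.2 hc), one_mul]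

theorem apply_add_le_of_isLeast_normBounds (hq : ∀ v z, 0 ≤ (J.quadForm v z z).re) (x y : V) :
    σ (x + y) ≤ σ x + σ y :=
  (hσ _).2 (add_mem_normBounds hq (hσ x).1 (hσ y).1)

end SpectralNorm

end HJTS

theorem stmt15_general [FiniteDimensional ℂ V] (J : HJTS V)
    (σ : V → ℝ) (hσ0 : σ 0 = 0)
    (hσ : ∀ x : V, x ≠ 0 → ∃ (s : ℕ) (l : Fin (s + 1) → ℝ) (e : Fin (s + 1) → V),
      StrictAnti l ∧ (∀ i, 0 < l i) ∧
      (∀ i, J.IsTripotent (e i) ∧ e i ≠ 0) ∧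
      (∀ i j, i ≠ j → J.Orthog (e i) (e j)) ∧
      x = ∑ i, (l i : ℂ) • e i ∧ σ x = l 0) :
    (∀ x : V, σ x = 0 ↔ x = 0) ∧
    (∀ (c : ℂ) (x : V), σ (c • x) = ‖c‖ * σ x) ∧
    (∀ x y : V, σ (x + y) ≤ σ x + σ y) ∧
    (∀ x : V, 0 ≤ σ x) := by
  have hdecomp (z : V) : ∃ (n : ℕ) (l : Fin n → ℝ) (e : Fin n → V),
      J.IsOrthogFamily e ∧ z = ∑ i, (l i : ℂ) • e i := by
    rcases eq_or_ne z 0 with rfl | hz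
    · exact ⟨0, Fin.elim0, Fin.elim0, ⟨fun i ↦ i.elim0, fun i ↦ i.elim0⟩, by simp⟩
    obtain ⟨s, l, e, -, -, he, horth, hz, -⟩ := hσ z hz
    exact ⟨s + 1, l, e, ⟨fun i ↦ (he i).1, fun _ _ ↦ horth _ _⟩, hz⟩
  have hB (w : V) : 0 ≤ (J.traceForm w w).re := by
    obtain ⟨n, l, e, hf, rfl⟩ := hdecomp w
    exact hf.traceForm_re_nonneg l
  have hq (v z : V) : 0 ≤ (J.quadForm v z z).re := by
    obtain ⟨n, l, e, hf, rfl⟩ := hdecomp z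
    exact hf.quadForm_re_nonneg hB l v
  have hleast (z : V) : IsLeast (J.normBounds z) (σ z) := by
    rcases eq_or_ne z 0 with rfl | hz
    · exact hσ0 ▸ HJTS.isLeast_normBounds_zero
    obtain ⟨s, l, e, hanti, hlpos, he, horth, rfl, hσz⟩ := hσ _ hz
    rw [hσz]
    refine HJTS.IsOrthogFamily.isLeast_normBounds ⟨fun i ↦ (he i).1, fun _ _ ↦ horth _ _⟩ hB
      (fun i ↦ ?_) (he 0).2
    rw [abs_of_pos (hlpos i)]
    exact hanti.antitone (Fin.zero_le i)
  refine ⟨fun x ↦ ⟨fun hx ↦ ?_, fun hx ↦ hx ▸ hσ0⟩, HJTS.apply_smul_of_isLeast_normBounds hleast,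
    HJTS.apply_add_le_of_isLeast_normBounds hleast hq, fun x ↦ (hleast x).1.1⟩
  by_contra hx0
  obtain ⟨s, l, -, -, hlpos, -, -, -, hσx⟩ := hσ x hx0
  exact (hlpos 0).ne' (hσx ▸ hx)

/-- In a finite-dimensional positive Hermitian Jordan triple system, the
map `x ↦ λ₁(x)` (largest coefficient in the spectral decomposition, with `λ₁(0) = 0`)
is a norm: it vanishes exactly at `0`, is absolutely homogeneous, and subadditive. -/
theorem stmt15 [FiniteDimensional ℂ V] (J : HJTS V) (hpos : J.IsPositive)
    (σ : V → ℝ) (hσ0 : σ 0 = 0)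
    (hσ : ∀ x : V, x ≠ 0 → ∃ (s : ℕ) (l : Fin (s + 1) → ℝ) (e : Fin (s + 1) → V),
      StrictAnti l ∧ (∀ i, 0 < l i) ∧
      (∀ i, J.IsTripotent (e i) ∧ e i ≠ 0) ∧
      (∀ i j, i ≠ j → J.Orthog (e i) (e j)) ∧
      x = ∑ i, (l i : ℂ) • e i ∧ σ x = l 0) :
    (∀ x : V, σ x = 0 ↔ x = 0) ∧
    (∀ (c : ℂ) (x : V), σ (c • x) = ‖c‖ * σ x) ∧
    (∀ x y : V, σ (x + y) ≤ σ x + σ y) ∧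
    (∀ x : V, 0 ≤ σ x) :=
  stmt15_general J σ hσ0 hσ
end
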